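/- arXiv:2406.02213 — 9 statements merged into one kernel-verified Lean document; each statement's English description precedes it below -/
import Mathlib

section
/- Let V, F, g be real-valued functions on the states of a finite DAG and let s be a non-terminal state. Suppose (i) V(s) = (1/|A(s)|) · Σ_{s' ∈ A(s)} V(s') (uniform-policy Bellman backup at s), (ii) F(s) = Σ_{s' ∈ A(s)} F(s')/|B(s')| (flow-iteration backup at s), (iii) g(s') = g(s) · |A(s)|/|B(s')| for every child s' ∈ A(s), and (iv) V(s') = F(s') · g(s') for every child s' ∈ A(s). Then V(s) = F(s) · g(s). -/
/-- The set of children of `s` (states reachable via one edge, i.e. available actions). -/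
def children {S : Type*} [Fintype S] (E : S → S → Prop) [DecidableRel E] (s : S) : Finset S :=
  Finset.univ.filter (fun s' => E s s')

/-- The set of parents of `s` (states with an edge into `s`). -/
def parents {S : Type*} [Fintype S] (E : S → S → Prop) [DecidableRel E] (s : S) : Finset S :=
  Finset.univ.filter (fun s'' => E s'' s)

/-- One-step induction: if the uniform-policy Bellman backup holds for `V` at a
non-terminal state `s`, the flow-iteration backup holds for `F` at `s`, the scaling recurrence
`g(s') = g(s)·|A(s)|/|B(s')|` holds for every child, and `V = F·g` on all children of `s`,
then `V(s) = F(s)·g(s)`. -/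
theorem stmt0 {S : Type*} [Fintype S] [DecidableEq S] (E : S → S → Prop) [DecidableRel E]
    (hacyc : ∀ s : S, ¬ Relation.TransGen E s s)
    (V F g : S → ℝ) (s : S)
    (hnonterm : (children E s).Nonempty)
    (hV : V s = (1 / ((children E s).card : ℝ)) * ∑ s' ∈ children E s, V s')
    (hF : F s = ∑ s' ∈ children E s, F s' / ((parents E s').card : ℝ))
    (hg : ∀ s' ∈ children E s,
      g s' = g s * ((children E s).card : ℝ) / ((parents E s').card : ℝ))
    (hVF : ∀ s' ∈ children E s, V s' = F s' * g s') :
    V s = F s * g s := by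
  have hn : ((children E s).card : ℝ) ≠ 0 := by
    exact_mod_cast Finset.card_ne_zero_of_mem hnonterm.choose_spec
  have key : ∑ s' ∈ children E s, V s'
      = ((children E s).card : ℝ) * g s
        * ∑ s' ∈ children E s, F s' / ((parents E s').card : ℝ) := by
    rw [Finset.mul_sum]
    exact Finset.sum_congr rfl fun s' hs' => by rw [hVF s' hs', hg s' hs']; ring
  rw [hV, key, ← hF]
  field_simp
end

section
/- Let G be a finite DAG with initial state s₀, nonempty terminal set X, reward function R : X → ℝ_{>0}, a flow-iteration solution F, and a scaling function g. Let V be the uniform-policy value function for the transformed terminal reward R'(x) = R(x)·g(x). Then V(s) = F(s)·g(s) for every state s ∈ S. (Theorem 4.2 of the paper: policy evaluation for the uniform policy with transformed rewards recovers the GFlowNet state flow up to the scaling g.) -/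
/-- **Theorem 4.2.** On a finite DAG with initial state `s₀` (from which every
state is reachable) and nonempty terminal set, given a positive terminal reward `R`, a
flow-iteration solution `F`, a scaling function `g` (with `g s₀ = 1` and
`g s' = g s · |A(s)| / |B(s')|` along every edge), the uniform-policy value function `V` for the
transformed terminal reward `R'(x) = R(x)·g(x)` satisfies `V(s) = F(s)·g(s)` at every state. -/
theorem stmt1 {S : Type*} [Fintype S] [DecidableEq S] (E : S → S → Prop) [DecidableRel E]
    (hacyc : ∀ s : S, ¬ Relation.TransGen E s s)
    (s₀ : S)
    (hreach : ∀ s : S, Relation.ReflTransGen E s₀ s)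
    (hX : ∃ x : S, children E x = ∅)
    (R : S → ℝ) (hRpos : ∀ x, children E x = ∅ → 0 < R x)
    (F V g : S → ℝ)
    -- `F` is a flow-iteration solution for `R`
    (hFterm : ∀ x, children E x = ∅ → F x = R x)
    (hFrec : ∀ s, (children E s).Nonempty →
      F s = ∑ s' ∈ children E s, F s' / ((parents E s').card : ℝ))
    -- `g` is a scaling function
    (hg0 : g s₀ = 1)
    (hg : ∀ s s', E s s' →
      g s' = g s * ((children E s).card : ℝ) / ((parents E s').card : ℝ))
    -- `V` is the uniform-policy value function for `R'(x) = R(x)·g(x)`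
    (hVterm : ∀ x, children E x = ∅ → V x = R x * g x)
    (hVrec : ∀ s, (children E s).Nonempty →
      V s = (1 / ((children E s).card : ℝ)) * ∑ s' ∈ children E s, V s') :
    ∀ s, V s = F s * g s := by
  have wf : WellFounded (fun a b : S => Relation.TransGen E b a) := by
    have h1 : IsIrrefl S (fun a b : S => Relation.TransGen E b a) := ⟨fun a h => hacyc a h⟩
    have h2 : IsTrans S (fun a b : S => Relation.TransGen E b a) :=
      ⟨fun a b c hab hbc => hbc.trans hab⟩
    exact Finite.wellFounded_of_trans_of_irrefl _
  intro s
  induction s using wf.induction with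
  | _ s ih =>
    rcases (children E s).eq_empty_or_nonempty with he | hne
    · rw [hVterm s he, hFterm s he]
    · have hc : ((children E s).card : ℝ) ≠ 0 := by
        have := Finset.card_pos.mpr hne
        positivity
      have key : ∀ s' ∈ children E s,
          V s' = (F s' / ((parents E s').card : ℝ)) * (((children E s).card : ℝ) * g s) := by
        intro s' hs'
        have hE : E s s' := by simpa [children] using hs'
        rw [ih s' (Relation.TransGen.single hE), hg s s' hE]
        ring
      rw [hVrec s hne, Finset.sum_congr rfl key, ← Finset.sum_mul, ← hFrec s hne]
      field_simp
end

section
/- Let G be a finite rooted tree viewed as a DAG (s₀ has no parents and every other state has exactly one parent), with nonempty terminal set X and reward R : X → ℝ_{>0}. For each state s, let g(s) = Π_{i=0}^{t-1} |A(s_i)| be the product of the numbers of available actions along the unique path s₀ = s_0 → s_1 → ⋯ → s_t = s from the root to s (g(s₀) = 1). Let F be the flow-iteration solution for R (which in a tree reads F(s) = Σ_{s' ∈ A(s)} F(s') for non-terminal s and F(x) = R(x) for x ∈ X), and let V be the uniform-policy value function for the transformed terminal reward R'(x) = R(x)·g(x). Then V(s) = F(s)·g(s) for every state s. (Theorem 4.1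 of the paper, the tree-DAG case.) -/
/-- **Theorem 4.1, tree case.** On a finite rooted tree (root `s₀` has no parents,
every other state has exactly one parent, every state is reachable from `s₀`) with nonempty
terminal set and positive terminal reward `R`, let `g` be the product of the numbers of
available actions along the unique path from the root (characterized by `g s₀ = 1` and
`g s' = g s · |A(s)|` for every edge `s → s'`, which in a tree equals
`g(s_t) = ∏_{i=0}^{t-1} |A(s_i)|`). If `F` is the flow-iteration solution for `R` and `V` is
the uniform-policy value function for the transformed terminal reward `R'(x) = R(x)·g(x)`,
then `V(s) = F(s)·g(s)` for every state `s`. -/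
theorem stmt2 {S : Type*} [Fintype S] [DecidableEq S] (E : S → S → Prop) [DecidableRel E]
    (hacyc : ∀ s : S, ¬ Relation.TransGen E s s)
    (s₀ : S)
    (hroot : parents E s₀ = ∅)
    (htree : ∀ s : S, s ≠ s₀ → (parents E s).card = 1)
    (hreach : ∀ s : S, Relation.ReflTransGen E s₀ s)
    (hX : ∃ x : S, children E x = ∅)
    (R : S → ℝ) (hRpos : ∀ x, children E x = ∅ → 0 < R x)
    (F V g : S → ℝ)
    -- `g` is the product of the numbers of available actions along the unique path from `s₀`
    (hg0 : g s₀ = 1)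
    (hg : ∀ s s', E s s' → g s' = g s * ((children E s).card : ℝ))
    -- `F` is the flow-iteration solution for `R` (tree form)
    (hFterm : ∀ x, children E x = ∅ → F x = R x)
    (hFrec : ∀ s, (children E s).Nonempty → F s = ∑ s' ∈ children E s, F s')
    -- `V` is the uniform-policy value function for `R'(x) = R(x)·g(x)`
    (hVterm : ∀ x, children E x = ∅ → V x = R x * g x)
    (hVrec : ∀ s, (children E s).Nonempty →
      V s = (1 / ((children E s).card : ℝ)) * ∑ s' ∈ children E s, V s') :
    ∀ s, V s = F s * g s := by
  have hwf : WellFounded (fun a b : S => Relation.TransGen E b a) := by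
    have : IsIrrefl S (fun a b : S => Relation.TransGen E b a) := ⟨fun a h => hacyc a h⟩
    have : IsTrans S (fun a b : S => Relation.TransGen E b a) :=
      ⟨fun a b c h1 h2 => h2.trans h1⟩
    exact Finite.wellFounded_of_trans_of_irrefl _
  intro s
  induction s using hwf.induction with
  | _ s ih =>
    by_cases h : children E s = ∅
    · rw [hVterm s h, hFterm s h]
    · have hne : (children E s).Nonempty := Finset.nonempty_iff_ne_empty.mpr h
      have hcard : (0 : ℝ) < ((children E s).card : ℝ) := by
        exact_mod_cast Finset.card_pos.mpr hne
      have hch : ∀ s' ∈ children E s, V s' = F s' * g s' := by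
        intro s' hs'
        have hE : E s s' := by
          simpa [children] using hs'
        exact ih s' (Relation.TransGen.single hE)
      rw [hVrec s hne, hFrec s hne]
      rw [Finset.sum_congr rfl hch]
      have : ∀ s' ∈ children E s, F s' * g s' = F s' * (g s * ((children E s).card : ℝ)) := by
        intro s' hs'
        have hE : E s s' := by simpa [children] using hs'
        rw [hg s s' hE]
      rw [Finset.sum_congr rfl this, ← Finset.sum_mul]
      field_simp
end

section
/- Let G be a finite DAG in which s₀ is the unique state with no parents, every state is reachable from s₀, X is the nonempty terminal set, every non-terminal state has at least one child, and R : X → ℝ is a reward function. Let F be the flow-iteration solution for R. Then F(s₀) = Σ_{x ∈ X} R(x); that is, the flow at the initial state equals the partition function of the reward. -/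
open Finset

section Flow

variable {S : Type*} [Fintype S] (E : S → S → Prop) [DecidableRel E]

theorem sum_sum_children_eq_sum_card_parents_smul {M : Type*} [AddCommMonoid M] (f : S → M) :
    ∑ s, ∑ s' ∈ children E s, f s' = ∑ s', (parents E s').card • f s' := by
  rw [Finset.sum_comm' (t' := univ) (s' := parents E) (by simp [children, parents])]
  simp only [sum_const]

variable {K : Type*} [Field K] [CharZero K]

theorem sum_sum_children_div_card_parents (g : S → K) :
    ∑ s, ∑ s' ∈ children E s, g s' / ((parents E s').card : K)
      = ∑ s' ∈ univ.filter (fun s' => (parents E s').Nonempty), g s' := by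
  rw [sum_sum_children_eq_sum_card_parents_smul, sum_filter]
  refine sum_congr rfl fun s' _ => ?_
  rw [nsmul_eq_mul]
  split_ifs with h
  · exact mul_div_cancel₀ _ (by exact_mod_cast h.card_pos.ne')
  · simp [not_nonempty_iff_eq_empty.mp h]

theorem sum_nonterminal_eq_sum_has_parent {F : S → K}
    (hFrec : ∀ s, (children E s).Nonempty →
      F s = ∑ s' ∈ children E s, F s' / ((parents E s').card : K)) :
    ∑ s ∈ univ.filter (fun s => (children E s).Nonempty), F s
      = ∑ s' ∈ univ.filter (fun s' => (parents E s').Nonempty), F s' := by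
  rw [← sum_sum_children_div_card_parents, sum_filter]
  refine sum_congr rfl fun s _ => ?_
  split_ifs with h
  · exact hFrec s h
  · simp [not_nonempty_iff_eq_empty.mp h]

theorem filter_parents_nonempty_eq_erase [DecidableEq S] {s₀ : S}
    (hroot : parents E s₀ = ∅) (hpar : ∀ s : S, s ≠ s₀ → (parents E s).Nonempty) :
    univ.filter (fun s => (parents E s).Nonempty) = univ.erase s₀ := by
  ext s
  simp only [mem_filter, mem_univ, true_and, mem_erase, and_true]
  refine ⟨fun h hs => ?_, hpar s⟩
  subst hs
  simp [hroot] at h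

end Flow

theorem stmt6_general {S : Type*} [Fintype S] [DecidableEq S] (E : S → S → Prop) [DecidableRel E]
    (s₀ : S)
    (hroot : parents E s₀ = ∅)
    (hpar : ∀ s : S, s ≠ s₀ → (parents E s).Nonempty)
    (R F : S → ℝ)
    (hFterm : ∀ x, children E x = ∅ → F x = R x)
    (hFrec : ∀ s, (children E s).Nonempty →
      F s = ∑ s' ∈ children E s, F s' / ((parents E s').card : ℝ)) :
    F s₀ = ∑ x ∈ Finset.univ.filter (fun x => children E x = ∅), R x := by
  have hterminal : ∑ x ∈ univ.filter (fun x => children E x = ∅), F x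
      = ∑ x ∈ univ.filter (fun x => children E x = ∅), R x :=
    sum_congr rfl fun x hx => hFterm x (mem_filter.mp hx).2
  have hnonterminal : ∑ s ∈ univ.filter (fun s => (children E s).Nonempty), F s
      = ∑ s ∈ univ.erase s₀, F s := by
    rw [sum_nonterminal_eq_sum_has_parent E hFrec, filter_parents_nonempty_eq_erase E hroot hpar]
  have hsplit := sum_filter_add_sum_filter_not univ (fun s => (children E s).Nonempty) F
  simp only [not_nonempty_iff_eq_empty] at hsplit
  linarith [add_sum_erase univ F (mem_univ s₀)]

/-- In a finite DAG in which `s₀` is the unique state with no parents, every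
state is reachable from `s₀`, the terminal set is nonempty, and `F` is the flow-iteration
solution for the reward `R`, the flow at the initial state equals the partition function:
`F(s₀) = Σ_{x ∈ X} R(x)`. -/
theorem stmt6 {S : Type*} [Fintype S] [DecidableEq S] (E : S → S → Prop) [DecidableRel E]
    (hacyc : ∀ s : S, ¬ Relation.TransGen E s s)
    (s₀ : S)
    (hroot : parents E s₀ = ∅)
    (hpar : ∀ s : S, s ≠ s₀ → (parents E s).Nonempty)
    (hreach : ∀ s : S, Relation.ReflTransGen E s₀ s)
    (hX : ∃ x : S, children E x = ∅)
    (R F : S → ℝ)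
    (hFterm : ∀ x, children E x = ∅ → F x = R x)
    (hFrec : ∀ s, (children E s).Nonempty →
      F s = ∑ s' ∈ children E s, F s' / ((parents E s').card : ℝ)) :
    F s₀ = ∑ x ∈ Finset.univ.filter (fun x => children E x = ∅), R x :=
  stmt6_general E s₀ hroot hpar R F hFterm hFrec
end

section
/- Let G be a finite rooted tree viewed as a DAG with root s₀, nonempty terminal set X, and reward R : X → ℝ_{>0}. For each state s, let g(s) be the product of |A(s_i)| along the unique path from s₀ to s. Let V be the uniform-policy value function for the transformed terminal reward R'(x) = R(x)·g(x). Then V(s₀) = Σ_{x ∈ X} R(x); that is, the value of the uniform policy at the root under the transformed reward equals the partition function, coinciding with the total flow F(s₀) of the GFlowNet. -/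
/-- On a finite rooted tree with root `s₀`, nonempty terminal set and positive
terminal reward `R`, let `g` be the product of `|A(s_i)|` along the unique path from the root
(characterized by `g s₀ = 1` and `g s' = g s · |A(s)|` for every edge `s → s'`). If `V` is the
uniform-policy value function for the transformed terminal reward `R'(x) = R(x)·g(x)`, then
`V(s₀) = Σ_{x ∈ X} R(x)`: the value at the root equals the partition function (the total
GFlowNet flow `F(s₀)`). -/
theorem stmt8 {S : Type*} [Fintype S] [DecidableEq S] (E : S → S → Prop) [DecidableRel E]
    (hacyc : ∀ s : S, ¬ Relation.TransGen E s s)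
    (s₀ : S)
    (hroot : parents E s₀ = ∅)
    (htree : ∀ s : S, s ≠ s₀ → (parents E s).card = 1)
    (hreach : ∀ s : S, Relation.ReflTransGen E s₀ s)
    (hX : ∃ x : S, children E x = ∅)
    (R : S → ℝ) (hRpos : ∀ x, children E x = ∅ → 0 < R x)
    (g V : S → ℝ)
    (hg0 : g s₀ = 1)
    (hg : ∀ s s', E s s' → g s' = g s * ((children E s).card : ℝ))
    (hVterm : ∀ x, children E x = ∅ → V x = R x * g x)
    (hVrec : ∀ s, (children E s).Nonempty →
      V s = (1 / ((children E s).card : ℝ)) * ∑ s' ∈ children E s, V s') :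
    V s₀ = ∑ x ∈ Finset.univ.filter (fun x => children E x = ∅), R x := by
  classical
  -- unique parent
  have hpar : ∀ p q x : S, E p x → E q x → p = q := by
    intro p q x hp hq
    have hx0 : x ≠ s₀ := by
      intro h
      have hp' : p ∈ parents E x := by simp [parents, hp]
      rw [h, hroot] at hp'
      exact absurd hp' (Finset.notMem_empty p)
    have hc := htree x hx0
    obtain ⟨y, hy⟩ := Finset.card_eq_one.mp hc
    have hpy : p ∈ parents E x := by simp [parents, hp]
    have hqy : q ∈ parents E x := by simp [parents, hq]
    rw [hy, Finset.mem_singleton] at hpy hqy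
    rw [hpy, hqy]
  -- ancestors of any node form a chain
  have hchain : ∀ x a b : S, Relation.ReflTransGen E a x →
      Relation.ReflTransGen E b x →
      Relation.ReflTransGen E a b ∨ Relation.ReflTransGen E b a := by
    intro x a b hax
    induction hax with
    | refl => intro hbx; exact Or.inr hbx
    | @tail c x hac hcx ih =>
      intro hbx
      rcases hbx.cases_tail with rfl | ⟨d, hbd, hdx⟩
      · exact Or.inl (hac.tail hcx)
      · have : d = c := hpar d c x hdx hcx
        subst this
        exact ih hbd
  -- two children of the same node reaching the same node are equal
  have hchild : ∀ s a b x : S, E s a → E s b → Relation.ReflTransGen E a x →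
      Relation.ReflTransGen E b x → a = b := by
    have key : ∀ s a b : S, E s a → E s b → Relation.ReflTransGen E a b → a = b := by
      intro s a b hsa hsb hab
      rcases hab.cases_tail with rfl | ⟨d, had, hdb⟩
      · rfl
      · have hds : d = s := hpar d s b hdb hsb
        rw [hds] at had
        exact absurd ((Relation.TransGen.single hsa).trans_right had) (hacyc a)
    intro s a b x hsa hsb hax hbx
    rcases hchain x a b hax hbx with h | h
    · exact key s a b hsa hsb h
    · exact (key s b a hsb hsa h).symm
  -- well-founded induction setup
  have hwf : WellFounded (fun a b : S => Relation.TransGen E b a) := by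
    have : IsTrans S (fun a b : S => Relation.TransGen E b a) :=
      ⟨fun a b c h1 h2 => h2.trans h1⟩
    have : IsIrrefl S (fun a b : S => Relation.TransGen E b a) :=
      ⟨fun a h => hacyc a h⟩
    exact Finite.wellFounded_of_trans_of_irrefl _
  have key : ∀ s : S, V s = g s *
      ∑ x ∈ Finset.univ.filter (fun x => children E x = ∅ ∧ Relation.ReflTransGen E s x), R x := by
    intro s
    induction s using hwf.induction with
    | _ s ih =>
    rcases Finset.eq_empty_or_nonempty (children E s) with hterm | hne
    · -- terminal case
      have hset : Finset.univ.filter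
          (fun x => children E x = ∅ ∧ Relation.ReflTransGen E s x) = {s} := by
        ext x
        simp only [Finset.mem_filter, Finset.mem_univ, true_and, Finset.mem_singleton]
        constructor
        · rintro ⟨hxterm, hsx⟩
          rcases hsx.cases_head with heq | ⟨c, hsc, _⟩
          · exact heq.symm
          · have hcmem : c ∈ children E s := by simp [children, hsc]
            rw [hterm] at hcmem
            exact absurd hcmem (Finset.notMem_empty c)
        · rintro rfl
          exact ⟨hterm, Relation.ReflTransGen.refl⟩
      rw [hset, Finset.sum_singleton, hVterm s hterm, mul_comm]
    · -- internal case
      have hk : (0 : ℝ) < ((children E s).card : ℝ) := by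
        exact_mod_cast Finset.card_pos.mpr hne
      have hsplit : Finset.univ.filter
          (fun x => children E x = ∅ ∧ Relation.ReflTransGen E s x)
          = (children E s).biUnion (fun s' => Finset.univ.filter
              (fun x => children E x = ∅ ∧ Relation.ReflTransGen E s' x)) := by
        ext x
        simp only [Finset.mem_filter, Finset.mem_univ, true_and, Finset.mem_biUnion]
        constructor
        · rintro ⟨hxterm, hsx⟩
          rcases hsx.cases_head with heq | ⟨c, hsc, hcx⟩
          · exact absurd (heq ▸ hxterm) hne.ne_empty
          · exact ⟨c, by simp [children, hsc], hxterm, hcx⟩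
        · rintro ⟨c, hc, hxterm, hcx⟩
          have hsc : E s c := by simpa [children] using hc
          exact ⟨hxterm, Relation.ReflTransGen.head hsc hcx⟩
      have hdisj : ∀ a ∈ children E s, ∀ b ∈ children E s, a ≠ b →
          Disjoint (Finset.univ.filter
              (fun x => children E x = ∅ ∧ Relation.ReflTransGen E a x))
            (Finset.univ.filter
              (fun x => children E x = ∅ ∧ Relation.ReflTransGen E b x)) := by
        intro a ha b hb hab
        rw [Finset.disjoint_left]
        intro x hxa hxb
        simp only [Finset.mem_filter, Finset.mem_univ, true_and] at hxa hxb
        have hEa : E s a := by simpa [children] using ha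
        have hEb : E s b := by simpa [children] using hb
        exact hab (hchild s a b x hEa hEb hxa.2 hxb.2)
      rw [hVrec s hne, hsplit, Finset.sum_biUnion hdisj]
      have hterms : ∀ s' ∈ children E s, V s' = g s *
          (((children E s).card : ℝ) *
          ∑ x ∈ Finset.univ.filter
            (fun x => children E x = ∅ ∧ Relation.ReflTransGen E s' x), R x) := by
        intro s' hs'
        have hEs' : E s s' := by simpa [children] using hs'
        rw [ih s' (Relation.TransGen.single hEs'), hg s s' hEs']
        ring
      rw [Finset.sum_congr rfl hterms, ← Finset.mul_sum, ← Finset.mul_sum]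
      field_simp
  rw [key s₀, hg0, one_mul]
  congr 1
  ext x
  simp [hreach x]
end

section
/- Let G be a finite DAG with nonempty terminal set X, every non-terminal state having at least one child, and reward R : X → ℝ_{>0}, and let F be the flow-iteration solution for R. Then (i) F(s) > 0 for every state s, and (ii) for every non-terminal state s, the forward policy P_F(s'|s) := F(s')/(|B(s')|·F(s)) for s' ∈ A(s) is a probability distribution on A(s), i.e., P_F(s'|s) ≥ 0 for all s' ∈ A(s) and Σ_{s' ∈ A(s)} P_F(s'|s) = 1. -/
/-- On a finite DAG with nonempty terminal set and positive terminal reward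
`R`, the flow-iteration solution `F` is positive at every state, and at every non-terminal `s`
the forward policy `P_F(s'|s) = F(s')/(|B(s')|·F(s))` is a probability distribution on the
children of `s`. -/
theorem stmt9 {S : Type*} [Fintype S] [DecidableEq S] (E : S → S → Prop) [DecidableRel E]
    (hacyc : ∀ s : S, ¬ Relation.TransGen E s s)
    (hX : ∃ x : S, children E x = ∅)
    (R : S → ℝ) (hRpos : ∀ x, children E x = ∅ → 0 < R x)
    (F : S → ℝ)
    (hFterm : ∀ x, children E x = ∅ → F x = R x)
    (hFrec : ∀ s, (children E s).Nonempty →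
      F s = ∑ s' ∈ children E s, F s' / ((parents E s').card : ℝ)) :
    (∀ s : S, 0 < F s) ∧
    (∀ s : S, (children E s).Nonempty →
      (∀ s' ∈ children E s, 0 ≤ F s' / (((parents E s').card : ℝ) * F s)) ∧
      ∑ s' ∈ children E s, F s' / (((parents E s').card : ℝ) * F s) = 1) := by
  -- the flipped transitive closure is well-founded on a finite type
  have : Finite S := inferInstance
  have hwf : WellFounded (fun a b : S => Relation.TransGen E b a) := by
    haveI : IsTrans S (fun a b : S => Relation.TransGen E b a) :=
      ⟨fun a b c hab hbc => Relation.TransGen.trans hbc hab⟩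
    haveI : IsIrrefl S (fun a b : S => Relation.TransGen E b a) :=
      ⟨fun a h => hacyc a h⟩
    exact Finite.wellFounded_of_trans_of_irrefl _
  have hpos : ∀ s : S, 0 < F s := by
    intro s
    induction s using hwf.induction with
    | _ s ih =>
      by_cases hc : children E s = ∅
      · rw [hFterm s hc]; exact hRpos s hc
      · have hne : (children E s).Nonempty := Finset.nonempty_iff_ne_empty.2 hc
        rw [hFrec s hne]
        apply Finset.sum_pos
        · intro s' hs'
          have hE : E s s' := by simpa [children] using hs'
          have hFpos : 0 < F s' := ih s' (Relation.TransGen.single hE)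
          have hcard : 0 < ((parents E s').card : ℝ) := by
            have : s ∈ parents E s' := by simp [parents, hE]
            exact_mod_cast Finset.card_pos.2 ⟨s, this⟩
          exact div_pos hFpos hcard
        · exact hne
  refine ⟨hpos, fun s hne => ⟨?_, ?_⟩⟩
  · intro s' hs'
    have hE : E s s' := by simpa [children] using hs'
    have hcard : (0:ℝ) ≤ ((parents E s').card : ℝ) := by positivity
    exact div_nonneg (hpos s').le (mul_nonneg hcard (hpos s).le)
  · have : ∑ s' ∈ children E s, F s' / (((parents E s').card : ℝ) * F s)
        = (∑ s' ∈ children E s, F s' / ((parents E s').card : ℝ)) / F s := by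
      rw [Finset.sum_div]
      exact Finset.sum_congr rfl fun s' _ => by rw [div_div]
    rw [this, ← hFrec s hne, div_self (hpos s).ne']
end

section
/- Let G be a finite DAG in which s₀ is the unique state with no parents, every state is reachable from s₀, X is the nonempty terminal set, every non-terminal state has at least one child, and R : X → ℝ_{>0} is a reward function. Let F be the flow-iteration solution for R and define the forward policy P_F(s'|s) = F(s')/(|B(s')|·F(s)) for each edge s → s'. Then for every terminal state x ∈ X, the sum over all complete trajectories τ = (s₀ → s₁ → ⋯ → s_n = x) of the products Π_{t=0}^{n-1} P_F(s_{t+1}|s_t) equals R(x)/F(s₀). In particular, the policy P_F samples each terminal state x with probability proportional to R(x) (reward matching). -/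
/-!
Group the paths from `s₀` to `s ≠ s₀` by their last edge `p → s`. If the paths ending in each
parent `p` carry total forward weight `F p / F s₀`, then appending `p → s` contributes
`(F p / F s₀) · F s / (|B(s)| F p) = F s / (|B(s)| F s₀)`, and the `|B(s)|` parents add up to
`F s / F s₀`. Induction along the DAG gives this for every `s`, in particular `R x / F s₀` for
terminal `x`. The cancellation of `F p` uses `F > 0`, which the flow recursion propagates upwards
from the positive rewards.
-/

open Finset Relation

section Flow

variable {S : Type*} {E : S → S → Prop}

theorem wellFounded_of_forall_not_transGen [Finite S] (hacyc : ∀ s, ¬ TransGen E s s) :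
    WellFounded E :=
  haveI : IsTrans S (TransGen E) := ⟨fun _ _ _ => TransGen.trans⟩
  haveI : Std.Irrefl (TransGen E) := ⟨hacyc⟩
  Subrelation.wf TransGen.single (Finite.wellFounded_of_trans_of_irrefl _)

def paths (E : S → S → Prop) (a b : S) : Set (List S) :=
  {l | l.IsChain E ∧ l.head? = some a ∧ l.getLast? = some b}

def pathWeight {M : Type*} [Monoid M] (w : S → S → M) (l : List S) : M :=
  ((l.zip l.tail).map fun p => w p.1 p.2).prod

section PathWeight

variable {M : Type*} [Monoid M] (w : S → S → M)

@[simp]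
theorem pathWeight_singleton (a : S) : pathWeight w [a] = 1 := rfl

@[simp]
theorem pathWeight_cons_cons (a b : S) (l : List S) :
    pathWeight w (a :: b :: l) = w a b * pathWeight w (b :: l) := rfl

theorem pathWeight_concat {l : List S} {p : S} (hl : l.getLast? = some p) (b : S) :
    pathWeight w (l ++ [b]) = pathWeight w l * w p b := by
  match l, hl with
  | [a], hl => simp_all
  | a :: c :: l, hl =>
    have ih := pathWeight_concat (l := c :: l) (by simpa using hl) b
    simp only [List.cons_append, pathWeight_cons_cons] at ih ⊢
    rw [ih, mul_assoc]

end PathWeight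

section Acyclic

variable (hacyc : ∀ s, ¬ TransGen E s s)
include hacyc

theorem List.IsChain.nodup_of_acyclic {l : List S} (hl : l.IsChain E) : l.Nodup :=
  (List.isChain_iff_pairwise.1 (hl.imp fun _ _ => TransGen.single)).imp
    fun {a _} hab h => by subst h; exact hacyc a hab

theorem paths_finite [Finite S] (a b : S) : (paths E a b).Finite := by
  have := Fintype.ofFinite S
  refine (List.finite_length_le S (Fintype.card S)).subset fun l hl => ?_
  exact (hl.1.nodup_of_acyclic hacyc).length_le_card

theorem paths_self (a : S) : paths E a a = {[a]} := by
  ext l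
  constructor
  · rintro ⟨hchain, hhead, hlast⟩
    obtain ⟨t, rfl⟩ : ∃ t, l = a :: t := List.head?_eq_some_iff.1 hhead
    rcases eq_or_ne t [] with rfl | ht
    · rfl
    · have hmem : a ∈ t := by
        rw [List.getLast?_cons, List.getLast?_eq_some_getLast ht] at hlast
        exact Option.some_injective _ hlast ▸ List.getLast_mem ht
      exact absurd hmem (List.nodup_cons.1 (hchain.nodup_of_acyclic hacyc)).1
  · rintro rfl
    exact ⟨List.isChain_singleton a, rfl, rfl⟩

end Acyclic

theorem mem_paths_of_ne {a b : S} (hab : b ≠ a) {l : List S} :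
    l ∈ paths E a b ↔ ∃ p, E p b ∧ ∃ l' ∈ paths E a p, l' ++ [b] = l := by
  constructor
  · rintro ⟨hchain, hhead, hlast⟩
    obtain ⟨l', rfl⟩ := List.getLast?_eq_some_iff.1 hlast
    have hl' : l' ≠ [] := by
      rintro rfl
      exact hab (Option.some_injective _ hhead)
    obtain ⟨p, hp⟩ := Option.ne_none_iff_exists'.1 (mt List.getLast?_eq_none_iff.1 hl')
    obtain ⟨hchain', -, hedge⟩ := List.isChain_append.1 hchain
    refine ⟨p, hedge p hp b rfl, l', ⟨hchain', ?_, hp⟩, rfl⟩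
    rwa [List.head?_append_of_ne_nil _ hl'] at hhead
  · rintro ⟨p, hpb, l', ⟨hchain', hhead', hlast'⟩, rfl⟩
    refine ⟨hchain'.append (List.isChain_singleton b) ?_, ?_, List.getLast?_concat⟩
    · simp_all
    · rw [List.head?_append, hhead', Option.some_or]

section Graph

variable [Fintype S] [DecidableRel E]

@[simp]
theorem mem_parents {s p : S} : p ∈ parents E s ↔ E p s := by simp [parents]

@[simp]
theorem mem_children {s c : S} : c ∈ children E s ↔ E s c := by simp [children]

theorem paths_eq_biUnion_parents {a b : S} (hab : b ≠ a) :
    paths E a b = ⋃ p ∈ (parents E b : Set S), (· ++ [b]) '' paths E a p := by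
  ext l
  simp [mem_paths_of_ne hab]

theorem finsum_pathWeight_eq_sum_parents (hacyc : ∀ s, ¬ TransGen E s s) {M : Type*} [Semiring M]
    (w : S → S → M) {a b : S} (hab : b ≠ a) :
    ∑ᶠ l ∈ paths E a b, pathWeight w l
      = ∑ p ∈ parents E b, (∑ᶠ l ∈ paths E a p, pathWeight w l) * w p b := by
  have hdisj : (parents E b : Set S).PairwiseDisjoint fun p => (· ++ [b]) '' paths E a p := by
    intro p _ q _ hpq
    refine Set.disjoint_left.2 ?_
    rintro _ ⟨l, hl, rfl⟩ ⟨l', hl', heq⟩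
    obtain rfl := List.append_left_injective _ heq
    exact hpq (Option.some_injective _ (hl.2.2.symm.trans hl'.2.2))
  rw [paths_eq_biUnion_parents hab,
    finsum_mem_biUnion hdisj (parents E b).finite_toSet
      fun p _ => (paths_finite hacyc a p).image _,
    finsum_mem_coe_finset]
  refine sum_congr rfl fun p _ => ?_
  rw [finsum_mem_image (List.append_left_injective _).injOn,
    finsum_mem_mul' _ _ (paths_finite hacyc a p)]
  exact finsum_mem_congr rfl fun l hl => pathWeight_concat w hl.2.2 b

theorem flow_pos (hacyc : ∀ s, ¬ TransGen E s s) {F : S → ℝ}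
    (hterm : ∀ x, children E x = ∅ → 0 < F x)
    (hrec : ∀ s, (children E s).Nonempty →
      F s = ∑ s' ∈ children E s, F s' / ((parents E s').card : ℝ))
    (s : S) : 0 < F s := by
  have hwf : WellFounded (Function.swap E) :=
    wellFounded_of_forall_not_transGen fun s h => hacyc s (transGen_swap.1 h)
  induction s using hwf.induction with | _ s ih =>
  rcases (children E s).eq_empty_or_nonempty with hleaf | hne
  · exact hterm s hleaf
  · rw [hrec s hne]
    refine sum_pos (fun c hc => div_pos (ih c (mem_children.1 hc : E s c)) ?_) hne
    exact_mod_cast card_pos.2 ⟨s, mem_parents.2 (mem_children.1 hc)⟩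

noncomputable def forwardPolicy (E : S → S → Prop) [DecidableRel E] (F : S → ℝ) (s s' : S) :
    ℝ :=
  F s' / ((parents E s').card * F s)

theorem finsum_pathWeight_forwardPolicy (hacyc : ∀ s, ¬ TransGen E s s) {s₀ : S}
    (hpar : ∀ s, s ≠ s₀ → (parents E s).Nonempty)
    {F : S → ℝ} (hF : ∀ s, 0 < F s) (s : S) :
    ∑ᶠ l ∈ paths E s₀ s, pathWeight (forwardPolicy E F) l = F s / F s₀ := by
  induction s using (wellFounded_of_forall_not_transGen hacyc).induction with | _ s ih =>
  by_cases hs : s = s₀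
  · subst hs
    rw [paths_self hacyc, finsum_mem_singleton, pathWeight_singleton, div_self (hF s).ne']
  have hcard : ((parents E s).card : ℝ) ≠ 0 := by exact_mod_cast (hpar s hs).card_pos.ne'
  calc ∑ᶠ l ∈ paths E s₀ s, pathWeight (forwardPolicy E F) l
      = ∑ p ∈ parents E s, (F p / F s₀) * forwardPolicy E F p s := by
        rw [finsum_pathWeight_eq_sum_parents hacyc _ hs]
        exact sum_congr rfl fun p hp => by rw [ih p (mem_parents.1 hp)]
    _ = ∑ p ∈ parents E s, F s / ((parents E s).card * F s₀) := by
        refine sum_congr rfl fun p _ => ?_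
        have hFp := (hF p).ne'
        rw [forwardPolicy]
        field_simp
    _ = F s / F s₀ := by
        rw [sum_const, nsmul_eq_mul]
        field_simp

end Graph

end Flow

theorem stmt10_general {S : Type*} [Fintype S] (E : S → S → Prop) [DecidableRel E]
    (hacyc : ∀ s : S, ¬ Relation.TransGen E s s)
    (s₀ : S)
    (hpar : ∀ s : S, s ≠ s₀ → (parents E s).Nonempty)
    (R : S → ℝ) (hRpos : ∀ x, children E x = ∅ → 0 < R x)
    (F : S → ℝ)
    (hFterm : ∀ x, children E x = ∅ → F x = R x)
    (hFrec : ∀ s, (children E s).Nonempty →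
      F s = ∑ s' ∈ children E s, F s' / ((parents E s').card : ℝ)) :
    ∀ x : S, children E x = ∅ →
      ∑ᶠ l ∈ {l : List S | l.Chain' E ∧ l.head? = some s₀ ∧ l.getLast? = some x},
        ((l.zip l.tail).map
          (fun p => F p.2 / (((parents E p.2).card : ℝ) * F p.1))).prod
      = R x / F s₀ := by
  intro x hx
  have hF : ∀ s, 0 < F s := flow_pos hacyc (fun x hx => hFterm x hx ▸ hRpos x hx) hFrec
  rw [← hFterm x hx]
  exact finsum_pathWeight_forwardPolicy hacyc hpar hF x

/-- **reward matching.** In a finite DAG in which `s₀` is the unique state with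
no parents, every state is reachable from `s₀`, the terminal set is nonempty, `R` is a positive
terminal reward and `F` the flow-iteration solution, define the forward policy
`P_F(s'|s) = F(s')/(|B(s')|·F(s))`. Then for every terminal state `x`, the sum over all complete
trajectories `τ = (s₀ → s₁ → ⋯ → s_n = x)` of `∏_{t=0}^{n-1} P_F(s_{t+1}|s_t)` equals
`R(x)/F(s₀)`; i.e. `P_F` samples each terminal state with probability proportional to its
reward. Trajectories are encoded as lists `l` with `l.Chain' E`, first element `s₀`, last
element `x`, and the product is taken over the consecutive pairs `l.zip l.tail`. -/
theorem stmt10 {S : Type*} [Fintype S] [DecidableEq S] (E : S → S → Prop) [DecidableRel E]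
    (hacyc : ∀ s : S, ¬ Relation.TransGen E s s)
    (s₀ : S)
    (hroot : parents E s₀ = ∅)
    (hpar : ∀ s : S, s ≠ s₀ → (parents E s).Nonempty)
    (hreach : ∀ s : S, Relation.ReflTransGen E s₀ s)
    (hX : ∃ x : S, children E x = ∅)
    (R : S → ℝ) (hRpos : ∀ x, children E x = ∅ → 0 < R x)
    (F : S → ℝ)
    (hFterm : ∀ x, children E x = ∅ → F x = R x)
    (hFrec : ∀ s, (children E s).Nonempty →
      F s = ∑ s' ∈ children E s, F s' / ((parents E s').card : ℝ)) :
    ∀ x : S, children E x = ∅ →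
      ∑ᶠ l ∈ {l : List S | l.Chain' E ∧ l.head? = some s₀ ∧ l.getLast? = some x},
        ((l.zip l.tail).map
          (fun p => F p.2 / (((parents E p.2).card : ℝ) * F p.1))).prod
      = R x / F s₀ :=
  stmt10_general E hacyc s₀ hpar R hRpos F hFterm hFrec
end

section
/- Let G be a finite DAG and let F : S → ℝ, together with edge-indexed functions P_F and P_B, satisfy: (i) detailed balance F(s)·P_F(s'|s) = F(s')·P_B(s|s') for every edge s → s'; (ii) Σ_{s' ∈ A(s)} P_F(s'|s) = 1 for every non-terminal s; and (iii) Σ_{s'' ∈ B(s)} P_B(s''|s) = 1 for every non-initial s. Then for every state s that is neither initial nor terminal, the total incoming edge flow equals the state flow equals the total outgoing edge flow: Σ_{s'' ∈ B(s)} F(s'')·P_F(s|s'') = F(s) = Σ_{s' ∈ A(s)} F(s)·P_F(s'|s). (Detailed balance together with normalized forward and backward policies implies the flow-matching consistency condition.) -/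
/-- On a finite DAG with initial state `s₀` (a state with no parents), if
`F`, `PF` (forward policy, `PF s s' = P_F(s'|s)`) and `PB` (backward policy,
`PB s'' s = P_B(s''|s)`) satisfy detailed balance on every edge, the forward policy is
normalized at every non-terminal state, and the backward policy is normalized at every
non-initial state, then at every state `s` that is neither initial nor terminal the
flow-matching consistency condition holds:
`Σ_{s'' ∈ B(s)} F(s'')·P_F(s|s'') = F(s) = Σ_{s' ∈ A(s)} F(s)·P_F(s'|s)`. -/
theorem stmt13 {S : Type*} [Fintype S] [DecidableEq S] (E : S → S → Prop) [DecidableRel E]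
    (hacyc : ∀ s : S, ¬ Relation.TransGen E s s)
    (s₀ : S) (hroot : parents E s₀ = ∅)
    (F : S → ℝ) (PF PB : S → S → ℝ)
    (hDB : ∀ s s', E s s' → F s * PF s s' = F s' * PB s s')
    (hPF : ∀ s, (children E s).Nonempty → ∑ s' ∈ children E s, PF s s' = 1)
    (hPB : ∀ s, s ≠ s₀ → ∑ s'' ∈ parents E s, PB s'' s = 1) :
    ∀ s, s ≠ s₀ → (children E s).Nonempty →
      (∑ s'' ∈ parents E s, F s'' * PF s'' s = F s) ∧
      (F s = ∑ s' ∈ children E s, F s * PF s s') := by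
  intro s hs hnt
  constructor
  · have : ∑ s'' ∈ parents E s, F s'' * PF s'' s
        = ∑ s'' ∈ parents E s, F s * PB s'' s := by
      apply Finset.sum_congr rfl
      intro x hx
      exact hDB x s (by simpa [parents] using hx)
    rw [this, ← Finset.mul_sum, hPB s hs, mul_one]
  · rw [← Finset.mul_sum, hPF s hnt, mul_one]
end

section
/- Let G be a finite DAG with nonempty terminal set X, every non-terminal state having at least one child, and reward R : X → ℝ_{>0}, and let F be the flow-iteration solution for R. Let W : S → ℝ satisfy the soft (MaxEnt RL, λ = 1) Bellman recursion with uniform-backward-policy reward correction: W(x) = log R(x) for x ∈ X and W(s) = log Σ_{s' ∈ A(s)} exp( log(1/|B(s')|) + W(s') ) for non-terminal s. Then W(s) = log F(s) for every state s; that is, the soft value function with intermediate rewards r(s → s') = log P_B(s|s') (uniform P_B) equals the logarithm of the GFlowNet state flow. -/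
/-- **GFlowNets as MaxEnt RL.** On a finite DAG with nonempty terminal set and
positive terminal reward `R`, let `F` be the flow-iteration solution for `R`, and let `W`
satisfy the soft (MaxEnt RL, λ = 1) Bellman recursion with the uniform-backward-policy reward
correction `r(s → s') = log P_B(s|s') = log(1/|B(s')|)`:
`W(x) = log R(x)` on terminal states and
`W(s) = log Σ_{s' ∈ A(s)} exp(log(1/|B(s')|) + W(s'))` at non-terminal states.
Then `W(s) = log F(s)` at every state. -/
theorem stmt16 {S : Type*} [Fintype S] [DecidableEq S] (E : S → S → Prop) [DecidableRel E]
    (hacyc : ∀ s : S, ¬ Relation.TransGen E s s)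
    (hX : ∃ x : S, children E x = ∅)
    (R : S → ℝ) (hRpos : ∀ x, children E x = ∅ → 0 < R x)
    (F W : S → ℝ)
    (hFterm : ∀ x, children E x = ∅ → F x = R x)
    (hFrec : ∀ s, (children E s).Nonempty →
      F s = ∑ s' ∈ children E s, F s' / ((parents E s').card : ℝ))
    (hWterm : ∀ x, children E x = ∅ → W x = Real.log (R x))
    (hWrec : ∀ s, (children E s).Nonempty →
      W s = Real.log (∑ s' ∈ children E s,
        Real.exp (Real.log (1 / ((parents E s').card : ℝ)) + W s'))) :
    ∀ s, W s = Real.log (F s) := by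

  -- Well-founded relation: a is a child of b
  have hwf : WellFounded (fun a b : S => E b a) := by
    have htrans : WellFounded (fun a b : S => Relation.TransGen E b a) := by
      have : IsTrans S (fun a b : S => Relation.TransGen E b a) :=
        ⟨fun a b c h1 h2 => Relation.TransGen.trans h2 h1⟩
      have : IsIrrefl S (fun a b : S => Relation.TransGen E b a) :=
        ⟨fun a h => hacyc a h⟩
      exact Finite.wellFounded_of_trans_of_irrefl _
    exact Subrelation.wf (fun h => Relation.TransGen.single h) htrans
  have key : ∀ s : S, W s = Real.log (F s) ∧ 0 < F s := by
    intro s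
    induction s using WellFounded.induction hwf with
    | _ s ih =>
      by_cases hc : children E s = ∅
      · refine ⟨?_, ?_⟩
        · rw [hWterm s hc, hFterm s hc]
        · rw [hFterm s hc]; exact hRpos s hc
      · have hne : (children E s).Nonempty := Finset.nonempty_iff_ne_empty.mpr hc
        have hmem : ∀ s' ∈ children E s, E s s' := by
          intro s' hs'
          simpa [children] using hs'
        have hpar : ∀ s' ∈ children E s, 0 < ((parents E s').card : ℝ) := by
          intro s' hs'
          have : s ∈ parents E s' := by simp [parents, hmem s' hs']
          exact_mod_cast Finset.card_pos.mpr ⟨s, this⟩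
        have hterm : ∀ s' ∈ children E s,
            Real.exp (Real.log (1 / ((parents E s').card : ℝ)) + W s')
              = F s' / ((parents E s').card : ℝ) := by
          intro s' hs'
          obtain ⟨hW', hF'⟩ := ih s' (hmem s' hs')
          rw [hW', Real.exp_add, Real.exp_log (one_div_pos.mpr (hpar s' hs')), Real.exp_log hF']
          ring
        have hFpos : 0 < F s := by
          rw [hFrec s hne]
          apply Finset.sum_pos
          · intro s' hs'
            exact div_pos (ih s' (hmem s' hs')).2 (hpar s' hs')
          · exact hne
        refine ⟨?_, hFpos⟩
        rw [hWrec s hne, Finset.sum_congr rfl hterm, ← hFrec s hne]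
  exact fun s => (key s).1
end
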